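/- Closest ℓ¹-point of the Alexiewicz ball: for f ∈ ℝⁿ, θ > 0, β ∈ [0,1], define recursively c*_1 = -sgn(f_1)·min{|f_1|, θ} and c*_{k+1} = -sgn(f_{k+1} - βc*_k)·min{|f_{k+1} - βc*_k|, θ}. Then the point p with p_1 = f_1 + c*_1 and p_{k+1} = f_{k+1} - βc*_k + c*_{k+1} minimizes the ℓ¹ norm over the set {(f_1 + c_1, f_2 - βc_1 + c_2, …, f_n - βc_{n-1} + c_n) : |c_k| ≤ θ for all k}. -/

import Mathlib

/-- The recursively-defined optimal shear coefficients. -/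
noncomputable def cstar (θ β : ℝ) (f : ℕ → ℝ) : ℕ → ℝ
  | 0 => -Real.sign (f 0) * min |f 0| θ
  | k + 1 => -Real.sign (f (k + 1) - β * cstar θ β f k) * min |f (k + 1) - β * cstar θ β f k| θ

/-- The sheared point associated to a coefficient sequence `c`. -/
def shearPt (β : ℝ) (f c : ℕ → ℝ) : ℕ → ℝ
  | 0 => f 0 + c 0
  | k + 1 => f (k + 1) - β * c k + c (k + 1)


/-!
For `|c| ≤ θ`, the soft-threshold shift `s = -sign g · min |g| θ` minimises `|g + c|`, with
slack exactly `|c - s|`. In the `k+1`-st coordinate, replacing `c_k` by `c*_k` moves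
`f_{k+1} - β c_k + c_{k+1}` by at most `β |c_k - c*_k| ≤ |c_k - c*_k|`, which is the slack
gained at step `k`. Hence `∑_{k ≤ n} |p*_k| + |c_n - c*_n| ≤ ∑_{k ≤ n} |p_k|` by induction on `n`.
-/

open Finset

noncomputable def shrink (θ g : ℝ) : ℝ := -Real.sign g * min |g| θ

lemma abs_add_shrink_add_abs_sub_shrink {θ g c : ℝ} (hc : |c| ≤ θ) :
    |g + shrink θ g| + |c - shrink θ g| = |g + c| := by
  obtain ⟨hc₁, hc₂⟩ := abs_le.mp hc
  rcases le_or_gt |g| θ with hg | hg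
  · have hshrink : shrink θ g = -g := by
      rcases lt_trichotomy g 0 with hg₀ | rfl | hg₀
      · rw [abs_of_neg hg₀] at hg
        simp [shrink, min_eq_left hg, Real.sign_of_neg hg₀, abs_of_neg hg₀]
      · simp [shrink]
      · rw [abs_of_pos hg₀] at hg
        simp [shrink, min_eq_left hg, Real.sign_of_pos hg₀, abs_of_pos hg₀]
    rw [hshrink, add_neg_cancel, abs_zero, zero_add, sub_neg_eq_add, add_comm]
  · -- Past the threshold both summands have the sign of `g`, so the triangle inequality is tight.
    have hsum : g + c = (g + shrink θ g) + (c - shrink θ g) := by ring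
    rw [hsum, eq_comm, abs_add_eq_add_abs_iff]
    rcases lt_or_gt_of_ne (show g ≠ 0 by rintro rfl; simp at hg; linarith) with hg₀ | hg₀
    · rw [abs_of_neg hg₀] at hg
      simp only [shrink, Real.sign_of_neg hg₀, abs_of_neg hg₀, min_eq_right hg.le]
      right; constructor <;> linarith
    · rw [abs_of_pos hg₀] at hg
      simp only [shrink, Real.sign_of_pos hg₀, abs_of_pos hg₀, min_eq_right hg.le]
      left; constructor <;> linarith

section Shear

variable {θ β : ℝ} {f c : ℕ → ℝ}

lemma abs_shearPt_cstar_zero_add_abs_sub (hc : |c 0| ≤ θ) :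
    |shearPt β f (cstar θ β f) 0| + |c 0 - cstar θ β f 0| = |shearPt β f c 0| :=
  abs_add_shrink_add_abs_sub_shrink hc

lemma abs_shearPt_cstar_succ_add_abs_sub_le (hβ : 0 ≤ β) {k : ℕ} (hc : |c (k + 1)| ≤ θ) :
    |shearPt β f (cstar θ β f) (k + 1)| + |c (k + 1) - cstar θ β f (k + 1)| ≤
      |shearPt β f c (k + 1)| + β * |c k - cstar θ β f k| := by
  set g := f (k + 1) - β * cstar θ β f k
  calc |shearPt β f (cstar θ β f) (k + 1)| + |c (k + 1) - cstar θ β f (k + 1)|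
      = |g + c (k + 1)| := abs_add_shrink_add_abs_sub_shrink hc
    _ = |shearPt β f c (k + 1) + β * (c k - cstar θ β f k)| := by
        simp only [shearPt, g]; ring_nf
    _ ≤ |shearPt β f c (k + 1)| + |β * (c k - cstar θ β f k)| := abs_add_le _ _
    _ = |shearPt β f c (k + 1)| + β * |c k - cstar θ β f k| := by
        rw [abs_mul, abs_of_nonneg hβ]

lemma sum_abs_shearPt_cstar_add_abs_sub_le (hβ : β ∈ Set.Icc (0 : ℝ) 1) {n : ℕ}
    (hc : ∀ k ≤ n, |c k| ≤ θ) :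
    ∑ k ∈ range (n + 1), |shearPt β f (cstar θ β f) k| + |c n - cstar θ β f n| ≤
      ∑ k ∈ range (n + 1), |shearPt β f c k| := by
  induction n with
  | zero => simpa using (abs_shearPt_cstar_zero_add_abs_sub (hc 0 le_rfl)).le
  | succ n ih =>
    have ih := ih fun k hk => hc k (hk.trans n.le_succ)
    have hstep := abs_shearPt_cstar_succ_add_abs_sub_le (f := f) hβ.1 (hc (n + 1) le_rfl)
    have hβ_le : β * |c n - cstar θ β f n| ≤ |c n - cstar θ β f n| :=
      mul_le_of_le_one_left (abs_nonneg _) hβ.2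
    rw [sum_range_succ, sum_range_succ (fun k => |shearPt β f c k|)]
    linarith

end Shear

theorem closest_l1_point_of_alexiewicz_ball_general (θ β : ℝ)
    (hβ : β ∈ Set.Icc (0 : ℝ) 1) (n : ℕ) (f : ℕ → ℝ) :
    ∀ c : ℕ → ℝ, (∀ k < n, |c k| ≤ θ) →
      ∑ k ∈ Finset.range n, |shearPt β f (cstar θ β f) k| ≤
        ∑ k ∈ Finset.range n, |shearPt β f c k| := by
  intro c hc
  cases n with
  | zero => simp
  | succ n =>
    have h := sum_abs_shearPt_cstar_add_abs_sub_le (f := f) hβ fun k hk =>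
      hc k (Nat.lt_succ_of_le hk)
    linarith [abs_nonneg (c n - cstar θ β f n)]

theorem closest_l1_point_of_alexiewicz_ball (θ β : ℝ) (hθ : 0 < θ)
    (hβ : β ∈ Set.Icc (0 : ℝ) 1) (n : ℕ) (f : ℕ → ℝ) :
    ∀ c : ℕ → ℝ, (∀ k < n, |c k| ≤ θ) →
      ∑ k ∈ Finset.range n, |shearPt β f (cstar θ β f) k| ≤
        ∑ k ∈ Finset.range n, |shearPt β f c k| :=
  closest_l1_point_of_alexiewicz_ball_general θ β hβ n f
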